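/- Let 𝒞 be the set of paths in ℰ of the form (i) (UD)^k for some k ≥ 0, or (ii) (UD)^{ℓ_1}U^{k_1}C_{k_1}(UD)^{ℓ_2}U^{k_2}C_{k_2}⋯(UD)^{ℓ_r}U^{k_r}C_{k_r}(UD)^{ℓ_{r+1}} with r ≥ 1, ℓ_i ≥ 0 for 1 ≤ i ≤ r+1, and k_i ≥ 2 for 1 ≤ i ≤ r. Then for every path P ∈ ℰ there exists exactly one path Q ∈ 𝒞 with |Q| = |P| such that P and Q are C-equivalent. In other words, 𝒞 is a complete set of representatives of the C-equivalence classes of ℰ. -/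

import Mathlib

/-- Steps of a Dyck path with catastrophes: up-step `U`, down-step `D`,
and catastrophe step `C k` of size `k` (valid paths only use `k ≥ 2`). -/
inductive Step where
  | U : Step
  | D : Step
  | C : ℕ → Step
  deriving DecidableEq

/-- The vertical displacement of a step. -/
def Step.val : Step → ℤ
  | .U => 1
  | .D => -1
  | .C k => -(k : ℤ)

/-- The height (ordinate) of the path after its first `i` steps. -/
def hgt (P : List Step) (i : ℕ) : ℤ := ((P.take i).map Step.val).sum

/-- `InE P` means `P` is a Dyck path with catastrophes (a member of ℰ):
it stays at height ≥ 0, ends on the x-axis, and every catastrophe step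
`C k` has `k ≥ 2` and starts at height `k` (hence ends on the x-axis). -/
def InE (P : List Step) : Prop :=
  (∀ i, 0 ≤ hgt P i) ∧ hgt P P.length = 0 ∧
    ∀ i k, P[i]? = some (Step.C k) → 2 ≤ k ∧ hgt P i = (k : ℤ)

/-- `(UD)^k`. -/
def UDpow (k : ℕ) : List Step := (List.replicate k [Step.U, Step.D]).flatten

/-- `(DU)^k`. -/
def DUpow (k : ℕ) : List Step := (List.replicate k [Step.D, Step.U]).flatten

/-- `U^k`. -/
def Upow (k : ℕ) : List Step := List.replicate k Step.U

/-- `C_s` with the convention `C_1 = D`. -/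
def cfin (s : ℕ) : Step := if s = 1 then Step.D else Step.C s

/-- Test whether a step is a catastrophe step. -/
def isCatB : Step → Bool
  | .C _ => true
  | _ => false

/-- The number of catastrophe steps in a path. -/
def catCount (P : List Step) : ℕ := P.countP isCatB

/-- Two paths are `C`-equivalent when, for every `k ≥ 2`, the catastrophe
steps `C k` occur at the same positions in both paths. -/
def CEquiv (P Q : List Step) : Prop :=
  ∀ k, 2 ≤ k → ∀ i : ℕ, P[i]? = some (Step.C k) ↔ Q[i]? = some (Step.C k)

/-- Membership in 𝒞 : paths of the form
`(UD)^{ℓ_1} U^{k_1} C_{k_1} ⋯ (UD)^{ℓ_r} U^{k_r} C_{k_r} (UD)^{ℓ_{r+1}}`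
with `r ≥ 0` and all `k_i ≥ 2` (the case `r = 0` giving `(UD)^k`). -/
def InC (P : List Step) : Prop :=
  ∃ (L : List (ℕ × ℕ)) (m : ℕ),
    (∀ p ∈ L, 2 ≤ p.2) ∧
    P = (L.map (fun p => UDpow p.1 ++ Upow p.2 ++ [Step.C p.2])).flatten ++ UDpow m

/-!
Cutting a path of ℰ just before its first catastrophe `C_k` leaves a catastrophe-free prefix of
height `k`, hence of length `2ℓ + k` for some `ℓ`, followed by `C_k` and a path of ℰ again. Replacing
the prefix by `(UD)^ℓ U^k` and recursing on the rest produces the representative in 𝒞. Conversely,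
in a path `(UD)^ℓ U^k C_k ⋯` of 𝒞 the first catastrophe sits at position `2ℓ + k`, so `ℓ` and `k`
are read off the catastrophe positions, and uniqueness follows by peeling off one block at a time.
-/

lemma Step.val_cfin (s : ℕ) : (cfin s).val = -s := by
  unfold cfin
  split_ifs with h <;> simp [Step.val, h]

lemma hgt_length (P : List Step) : hgt P P.length = (P.map Step.val).sum := by
  simp [hgt]

lemma hgt_of_length_le {P : List Step} {i : ℕ} (h : P.length ≤ i) :
    hgt P i = (P.map Step.val).sum := by
  simp [hgt, List.take_of_length_le h]

lemma hgt_append_of_le_length {A : List Step} (B : List Step) {i : ℕ} (h : i ≤ A.length) :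
    hgt (A ++ B) i = hgt A i := by
  simp [hgt, List.take_append_of_le_length h]

lemma hgt_append_length_add (A B : List Step) (j : ℕ) :
    hgt (A ++ B) (A.length + j) = (A.map Step.val).sum + hgt B j := by
  simp [hgt, List.take_add]

lemma hgt_Upow (k i : ℕ) : hgt (Upow k) i = min i k := by
  simp [hgt, Upow, List.take_replicate, Step.val]

lemma exists_length_eq_two_mul_add_sum {A : List Step} (hA : ∀ k, Step.C k ∉ A) :
    ∃ ℓ : ℕ, (A.length : ℤ) = 2 * ℓ + (A.map Step.val).sum := by
  induction A with
  | nil => exact ⟨0, by simp⟩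
  | cons s A ih =>
    obtain ⟨ℓ, hℓ⟩ := ih fun k hk => hA k (List.mem_cons_of_mem s hk)
    cases s with
    | U => exact ⟨ℓ, by simp [Step.val, hℓ]; ring⟩
    | D => exact ⟨ℓ + 1, by simp [Step.val, hℓ]; ring⟩
    | C k => exact absurd List.mem_cons_self (hA k)

lemma C_not_mem_UDpow (ℓ k : ℕ) : Step.C k ∉ UDpow ℓ := by
  simp [UDpow, List.mem_flatten, List.mem_replicate]

lemma C_not_mem_Upow (ℓ k : ℕ) : Step.C k ∉ Upow ℓ := by
  simp [Upow, List.mem_replicate]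

lemma C_not_mem_UDpow_append_Upow (ℓ k k' : ℕ) : Step.C k' ∉ UDpow ℓ ++ Upow k := fun h =>
  (List.mem_append.mp h).elim (C_not_mem_UDpow ℓ k') (C_not_mem_Upow k k')

lemma InE.append {A B : List Step} (hA : InE A) (hB : InE B) : InE (A ++ B) := by
  obtain ⟨hA_nonneg, hA_end, hA_cat⟩ := hA
  obtain ⟨hB_nonneg, hB_end, hB_cat⟩ := hB
  rw [hgt_length] at hA_end
  refine ⟨fun i => ?_, ?_, fun i k hi => ?_⟩
  · rcases le_or_gt i A.length with h | h
    · rw [hgt_append_of_le_length B h]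
      exact hA_nonneg i
    · obtain ⟨j, rfl⟩ := Nat.exists_eq_add_of_le h.le
      rw [hgt_append_length_add, hA_end, zero_add]
      exact hB_nonneg j
  · rw [List.length_append, hgt_append_length_add, hA_end, hB_end, add_zero]
  · rcases lt_or_ge i A.length with h | h
    · rw [List.getElem?_append_left h] at hi
      rw [hgt_append_of_le_length B h.le]
      exact hA_cat i k hi
    · obtain ⟨j, rfl⟩ := Nat.exists_eq_add_of_le h
      rw [List.getElem?_append_right h, Nat.add_sub_cancel_left] at hi
      rw [hgt_append_length_add, hA_end, zero_add]
      exact hB_cat j k hi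

lemma InE.of_append {A B : List Step} (h : InE (A ++ B)) (hA : (A.map Step.val).sum = 0) :
    InE B := by
  obtain ⟨h_nonneg, h_end, h_cat⟩ := h
  have hgt_eq (j : ℕ) : hgt B j = hgt (A ++ B) (A.length + j) := by
    rw [hgt_append_length_add, hA, zero_add]
  refine ⟨fun j => hgt_eq j ▸ h_nonneg _, ?_, fun j k hj => ?_⟩
  · rw [hgt_eq, ← List.length_append, h_end]
  · rw [hgt_eq]
    apply h_cat
    rwa [List.getElem?_append_right (Nat.le_add_right _ _), Nat.add_sub_cancel_left]

/-- For `k = 1` this is the path `UD`, for `k ≥ 2` the path `U^k C_k`. -/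
lemma inE_Upow_append_cfin {k : ℕ} (hk : 1 ≤ k) : InE (Upow k ++ [cfin k]) := by
  have hsum : ((Upow k ++ [cfin k]).map Step.val).sum = 0 := by
    simp [Upow, Step.val_cfin, show Step.U.val = 1 from rfl]
  refine ⟨fun i => ?_, by rw [hgt_length, hsum], fun i k' hi => ?_⟩
  · rcases le_or_gt i k with h | h
    · rw [hgt_append_of_le_length _ (by simpa [Upow] using h), hgt_Upow]
      positivity
    · rw [hgt_of_length_le (by simpa [Upow] using h), hsum]
  · have hik : i = k := by
      by_contra hne
      rcases lt_or_gt_of_ne hne with h | h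
      · rw [List.getElem?_append_left (by simpa [Upow] using h)] at hi
        exact C_not_mem_Upow k k' (List.mem_of_getElem? hi)
      · rw [List.getElem?_eq_none (by simpa [Upow] using h)] at hi
        simp at hi
    subst hik
    rw [List.getElem?_append_right (by simp [Upow]), Upow, List.length_replicate, Nat.sub_self,
      List.getElem?_cons_zero, Option.some_inj] at hi
    unfold cfin at hi
    split_ifs at hi with h1
    obtain rfl := Step.C.inj hi
    refine ⟨by omega, ?_⟩
    rw [hgt_append_of_le_length _ (by simp [Upow]), hgt_Upow, min_self]

lemma inE_UDpow (ℓ : ℕ) : InE (UDpow ℓ) := by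
  induction ℓ with
  | zero => exact ⟨fun i => by simp [hgt, UDpow], by simp [hgt, UDpow], by simp [UDpow]⟩
  | succ ℓ ih =>
    have hUD : InE [Step.U, Step.D] := inE_Upow_append_cfin le_rfl
    simpa [UDpow, List.replicate_succ] using hUD.append ih

def catBlock (ℓ k : ℕ) : List Step := UDpow ℓ ++ Upow k ++ [Step.C k]

lemma length_catBlock (ℓ k : ℕ) : (catBlock ℓ k).length = 2 * ℓ + k + 1 := by
  simp [catBlock, UDpow, Upow]
  ring

lemma inE_catBlock {ℓ k : ℕ} (hk : 2 ≤ k) : InE (catBlock ℓ k) := by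
  have h := inE_Upow_append_cfin (k := k) (by omega)
  rw [cfin, if_neg (by omega)] at h
  rw [catBlock, List.append_assoc]
  exact (inE_UDpow ℓ).append h

lemma getElem?_catBlock_append_eq_C_iff {ℓ k k' j : ℕ} {T : List Step} (hj : j ≤ 2 * ℓ + k) :
    (catBlock ℓ k ++ T)[j]? = some (Step.C k') ↔ j = 2 * ℓ + k ∧ k' = k := by
  have hlen : (UDpow ℓ ++ Upow k).length = 2 * ℓ + k := by simp [UDpow, Upow]; ring
  rw [List.getElem?_append_left (by rw [length_catBlock]; omega), catBlock]
  rcases hj.lt_or_eq with hj | rfl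
  · rw [List.getElem?_append_left (by omega)]
    exact iff_of_false (fun h => C_not_mem_UDpow_append_Upow ℓ k k' (List.mem_of_getElem? h))
      (by omega)
  · rw [List.getElem?_append_right hlen.le, hlen, Nat.sub_self]
    simp [eq_comm]

lemma CEquiv.refl (P : List Step) : CEquiv P P := fun _ _ _ => Iff.rfl

lemma CEquiv.symm {P Q : List Step} (h : CEquiv P Q) : CEquiv Q P :=
  fun k hk i => (h k hk i).symm

lemma CEquiv.trans {P Q R : List Step} (hPQ : CEquiv P Q) (hQR : CEquiv Q R) : CEquiv P R :=
  fun k hk i => (hPQ k hk i).trans (hQR k hk i)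

lemma CEquiv.of_forall_C_not_mem {P Q : List Step} (hP : ∀ k, Step.C k ∉ P)
    (hQ : ∀ k, Step.C k ∉ Q) : CEquiv P Q :=
  fun k _ _ => iff_of_false (fun h => hP k (List.mem_of_getElem? h))
    (fun h => hQ k (List.mem_of_getElem? h))

lemma CEquiv.append {A A' B B' : List Step} (hlen : A.length = A'.length) (hA : CEquiv A A')
    (hB : CEquiv B B') : CEquiv (A ++ B) (A' ++ B') := by
  intro k hk i
  rcases lt_or_ge i A.length with h | h
  · rw [List.getElem?_append_left h, List.getElem?_append_left (hlen ▸ h)]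
    exact hA k hk i
  · rw [List.getElem?_append_right h, List.getElem?_append_right (hlen ▸ h), hlen]
    exact hB k hk _

lemma CEquiv.of_append {A A' B B' : List Step} (hlen : A.length = A'.length)
    (h : CEquiv (A ++ B) (A' ++ B')) : CEquiv B B' := by
  intro k hk i
  have := h k hk (A.length + i)
  rwa [List.getElem?_append_right (by omega), List.getElem?_append_right (by omega), ← hlen,
    Nat.add_sub_cancel_left] at this

lemma not_cEquiv_UDpow_catBlock_append {m ℓ k : ℕ} {T : List Step} (hk : 2 ≤ k) :
    ¬ CEquiv (UDpow m) (catBlock ℓ k ++ T) := fun h =>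
  C_not_mem_UDpow m k <| List.mem_of_getElem? <|
    (h k hk _).mpr ((getElem?_catBlock_append_eq_C_iff le_rfl).mpr ⟨rfl, rfl⟩)

lemma eq_of_cEquiv_catBlock_append {ℓ k ℓ' k' : ℕ} {T T' : List Step} (hk : 2 ≤ k)
    (hk' : 2 ≤ k') (h : CEquiv (catBlock ℓ k ++ T) (catBlock ℓ' k' ++ T')) :
    ℓ = ℓ' ∧ k = k' := by
  rcases le_total (2 * ℓ + k) (2 * ℓ' + k') with hle | hle
  · have := (h k hk _).mp ((getElem?_catBlock_append_eq_C_iff le_rfl).mpr ⟨rfl, rfl⟩)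
    obtain ⟨hpos, rfl⟩ := (getElem?_catBlock_append_eq_C_iff hle).mp this
    exact ⟨by omega, rfl⟩
  · have := (h k' hk' _).mpr ((getElem?_catBlock_append_eq_C_iff le_rfl).mpr ⟨rfl, rfl⟩)
    obtain ⟨hpos, rfl⟩ := (getElem?_catBlock_append_eq_C_iff hle).mp this
    exact ⟨by omega, rfl⟩

lemma inC_UDpow (m : ℕ) : InC (UDpow m) := ⟨[], m, by simp, by simp⟩

lemma InC.catBlock_append {ℓ k : ℕ} {Q : List Step} (hk : 2 ≤ k) (hQ : InC Q) :
    InC (catBlock ℓ k ++ Q) := by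
  obtain ⟨L, m, hL, rfl⟩ := hQ
  refine ⟨(ℓ, k) :: L, m, ?_, ?_⟩
  · rintro p (_ | ⟨_, hp⟩)
    exacts [hk, hL p hp]
  · simp [catBlock]

theorem InC.induction {motive : (Q : List Step) → InC Q → Prop}
    (udpow : ∀ m, motive (UDpow m) (inC_UDpow m))
    (catBlock_append : ∀ ℓ k Q (hk : 2 ≤ k) (hQ : InC Q),
      motive Q hQ → motive (catBlock ℓ k ++ Q) (hQ.catBlock_append hk))
    {Q : List Step} (hQ : InC Q) : motive Q hQ := by
  obtain ⟨L, m, hL, rfl⟩ := hQ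
  induction L with
  | nil => simpa using udpow m
  | cons p L ih =>
    have hL' : ∀ q ∈ L, 2 ≤ q.2 := fun q hq => hL q (List.mem_cons_of_mem p hq)
    simpa [catBlock] using
      catBlock_append p.1 p.2 _ (hL p List.mem_cons_self) ⟨L, m, hL', rfl⟩ (ih hL')

lemma InC.inE {Q : List Step} (hQ : InC Q) : InE Q :=
  hQ.induction (motive := fun Q _ => InE Q) inE_UDpow
    fun _ _ _ hk _ ih => (inE_catBlock hk).append ih

lemma InC.eq_of_cEquiv {Q Q' : List Step} (hQ : InC Q) (hQ' : InC Q')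
    (hlen : Q.length = Q'.length) (h : CEquiv Q Q') : Q = Q' := by
  induction hQ using InC.induction generalizing Q' with
  | udpow m =>
    induction hQ' using InC.induction with
    | udpow m' => simp_all [UDpow]
    | catBlock_append ℓ k T hk _ _ => exact absurd h (not_cEquiv_UDpow_catBlock_append hk)
  | catBlock_append ℓ k T hk _ ih =>
    induction hQ' using InC.induction with
    | udpow m' => exact absurd h.symm (not_cEquiv_UDpow_catBlock_append hk)
    | catBlock_append ℓ' k' T' hk' hT' _ =>
      obtain ⟨rfl, rfl⟩ := eq_of_cEquiv_catBlock_append hk hk' h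
      rw [ih hT' (by simpa using hlen) (h.of_append rfl)]

lemma InE.split_first_catastrophe {A R : List Step} {k : ℕ} (hP : InE (A ++ Step.C k :: R))
    (hA : ∀ k, Step.C k ∉ A) : 2 ≤ k ∧ (∃ ℓ, A.length = 2 * ℓ + k) ∧ InE R := by
  obtain ⟨hk, hAk⟩ := hP.2.2 A.length k (by simp)
  rw [hgt_append_of_le_length _ le_rfl, hgt_length] at hAk
  obtain ⟨ℓ, hℓ⟩ := exists_length_eq_two_mul_add_sum hA
  rw [List.append_cons] at hP
  exact ⟨hk, ⟨ℓ, by omega⟩, hP.of_append (by simp [hAk, Step.val])⟩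

theorem exists_inC_cEquiv {P : List Step} (hP : InE P) :
    ∃ Q, InC Q ∧ Q.length = P.length ∧ CEquiv P Q := by
  induction hn : P.length using Nat.strong_induction_on generalizing P with
  | _ n ih =>
  cases hfind : P.find? isCatB with
  | none =>
    have hfree : ∀ k, Step.C k ∉ P := fun k hk =>
      List.find?_eq_none.mp hfind _ hk rfl
    obtain ⟨m, hm⟩ := exists_length_eq_two_mul_add_sum hfree
    have hsum := hP.2.1
    rw [hgt_length] at hsum
    refine ⟨UDpow m, inC_UDpow m, ?_, CEquiv.of_forall_C_not_mem hfree (C_not_mem_UDpow m)⟩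
    simp [UDpow]
    omega
  | some b =>
    obtain ⟨hb, A, R, rfl, hA⟩ := List.find?_eq_some_iff_append.mp hfind
    obtain ⟨k, rfl⟩ : ∃ k, b = Step.C k := by cases b <;> simp_all [isCatB]
    have hAfree : ∀ k, Step.C k ∉ A := fun k hk => by simpa [isCatB] using hA _ hk
    obtain ⟨hk, ⟨ℓ, hℓ⟩, hR⟩ := hP.split_first_catastrophe hAfree
    obtain ⟨Q, hQ, hQlen, hRQ⟩ := ih R.length (by simp [← hn]; omega) hR rfl
    have hlenA : A.length = (UDpow ℓ ++ Upow k).length := by simp [UDpow, Upow]; omega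
    refine ⟨catBlock ℓ k ++ Q, hQ.catBlock_append hk, ?_, ?_⟩
    · rw [← hn]
      simp [length_catBlock, hQlen]
      omega
    · rw [List.append_cons, catBlock]
      have hprefix := CEquiv.of_forall_C_not_mem hAfree (C_not_mem_UDpow_append_Upow ℓ k)
      exact CEquiv.append (by simp [hlenA, add_assoc]) (hprefix.append hlenA (.refl _)) hRQ

/-- 𝒞 is a complete set of representatives of the C-equivalence classes of ℰ. -/
theorem C_complete_set_of_representatives_for_CEquiv (P : List Step) (hP : InE P) :
    ∃! Q : List Step, (InE Q ∧ InC Q) ∧ Q.length = P.length ∧ CEquiv P Q := by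
  obtain ⟨Q, hQ, hlen, hPQ⟩ := exists_inC_cEquiv hP
  refine ⟨Q, ⟨⟨hQ.inE, hQ⟩, hlen, hPQ⟩, ?_⟩
  rintro Q' ⟨⟨-, hQ'⟩, hlen', hPQ'⟩
  exact hQ'.eq_of_cEquiv hQ (hlen'.trans hlen.symm) (hPQ'.symm.trans hPQ)
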